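/- arXiv:2308.00509 — 2 statements merged into one kernel-verified Lean document; each statement's English description precedes it below -/
import Mathlib

section
/- For any Boolean function f : {-1,1}^n → {-1,1}, E_x[|𝒫(x)|²] = ∑_S |S|² f̂(S)², i.e., the second moment of the pivotal set size equals the second moment of the spectral sample size. -/
open Finset

noncomputable def bSgn (b : Bool) : ℝ := if b then 1 else -1

noncomputable def bChi {n : ℕ} (S : Finset (Fin n)) (x : Fin n → Bool) : ℝ :=
  ∏ i ∈ S, bSgn (x i)

noncomputable def bExpect {n : ℕ} (g : (Fin n → Bool) → ℝ) : ℝ :=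
  (∑ x : Fin n → Bool, g x) / 2 ^ n

noncomputable def bFourier {n : ℕ} (f : (Fin n → Bool) → ℝ) (S : Finset (Fin n)) : ℝ :=
  bExpect fun x => f x * bChi S x

def bFlip1 {n : ℕ} (k : Fin n) (x : Fin n → Bool) : Fin n → Bool :=
  Function.update x k (!(x k))

def bFlipS {n : ℕ} (T : Finset (Fin n)) (x : Fin n → Bool) : Fin n → Bool :=
  fun i => if i ∈ T then !(x i) else x i

/-- combinatorial influence of bit `k` -/
noncomputable def inflC {n : ℕ} (f : (Fin n → Bool) → ℝ) (k : Fin n) : ℝ :=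
  bExpect fun x => if f x ≠ f (bFlip1 k x) then 1 else 0

/-- spectral influence of bit `k` -/
noncomputable def inflS {n : ℕ} (f : (Fin n → Bool) → ℝ) (k : Fin n) : ℝ :=
  ∑ S ∈ univ.filter (fun S : Finset (Fin n) => k ∈ S), bFourier f S ^ 2

/-- total influence (spectral form) -/
noncomputable def totInfl {n : ℕ} (f : (Fin n → Bool) → ℝ) : ℝ :=
  ∑ S : Finset (Fin n), (S.card : ℝ) * bFourier f S ^ 2

/-- spectrum entropy, base 2; terms with zero coefficient contribute 0 -/
noncomputable def specEnt {n : ℕ} (f : (Fin n → Bool) → ℝ) : ℝ :=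
  ∑ S : Finset (Fin n), bFourier f S ^ 2 * Real.logb 2 (1 / bFourier f S ^ 2)

/-- `f` is Boolean (±1)-valued -/
def IsBooleanFn {n : ℕ} (f : (Fin n → Bool) → ℝ) : Prop :=
  ∀ x, f x = 1 ∨ f x = -1

/-! Bit `k` is pivotal at `x` exactly when `f x * (f x - f xᵏ) / 2 = 1`, where `xᵏ` is `x`
with bit `k` flipped, and by Fourier inversion `(f x - f xᵏ) / 2 = ∑_{S ∋ k} f̂(S) χ_S(x)`. Summing
over `k` gives `|𝒫(x)| = f x · ∑_S |S| f̂(S) χ_S(x)`; as `f x ^ 2 = 1`, Parseval turns the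
second moment of `|𝒫(x)|` into `∑_S |S|² f̂(S)²`. -/

section Characters

variable {n : ℕ}

lemma bSgn_mul_self (b : Bool) : bSgn b * bSgn b = 1 := by
  cases b <;> simp [bSgn]

lemma bSgn_not (b : Bool) : bSgn (!b) = -bSgn b := by
  cases b <;> simp [bSgn]

lemma bSgn_mul_bSgn_add_one (a b : Bool) : bSgn a * bSgn b + 1 = if a = b then 2 else 0 := by
  cases a <;> cases b <;> norm_num [bSgn]

lemma bChi_eq_prod_univ (S : Finset (Fin n)) (x : Fin n → Bool) :
    bChi S x = ∏ i, if i ∈ S then bSgn (x i) else 1 := by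
  rw [prod_ite_mem, univ_inter]
  rfl

lemma bChi_mul_bChi (S T : Finset (Fin n)) (x : Fin n → Bool) :
    bChi S x * bChi T x = bChi (symmDiff S T) x := by
  simp only [bChi_eq_prod_univ, ← prod_mul_distrib]
  refine prod_congr rfl fun i _ => ?_
  by_cases hS : i ∈ S <;> by_cases hT : i ∈ T <;>
    simp [hS, hT, mem_symmDiff, bSgn_mul_self]

lemma sum_bChi (S : Finset (Fin n)) :
    ∑ x : Fin n → Bool, bChi S x = if S = ∅ then 2 ^ n else 0 := by
  simp only [bChi_eq_prod_univ]
  rw [← Fintype.prod_sum fun i (b : Bool) => if i ∈ S then bSgn b else 1]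
  split_ifs with hS
  · simp [hS]
  · obtain ⟨k, hk⟩ := nonempty_of_ne_empty hS
    exact prod_eq_zero (mem_univ k) (by simp [hk, bSgn])

lemma bExpect_bChi_mul_bChi (S T : Finset (Fin n)) :
    bExpect (fun x => bChi S x * bChi T x) = if S = T then 1 else 0 := by
  simp only [bExpect, bChi_mul_bChi, sum_bChi, ← bot_eq_empty, symmDiff_eq_bot]
  split_ifs <;> simp

lemma sum_bChi_mul_bChi_apply (x y : Fin n → Bool) :
    ∑ S : Finset (Fin n), bChi S y * bChi S x = if y = x then 2 ^ n else 0 := by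
  calc ∑ S : Finset (Fin n), bChi S y * bChi S x
      = ∏ i, (bSgn (y i) * bSgn (x i) + 1) := by
        simp only [prod_add_one, powerset_univ, bChi, prod_mul_distrib]
    _ = if y = x then 2 ^ n else 0 := by
        simp only [bSgn_mul_bSgn_add_one]
        split_ifs with hyx
        · simp [hyx]
        · obtain ⟨i, hi⟩ := Function.ne_iff.mp hyx
          exact prod_eq_zero (mem_univ i) (if_neg hi)

end Characters

section Expectation

variable {n : ℕ}

lemma bExpect_sum {ι : Type*} (s : Finset ι) (g : ι → (Fin n → Bool) → ℝ) :
    bExpect (fun x => ∑ i ∈ s, g i x) = ∑ i ∈ s, bExpect (g i) := by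
  simp only [bExpect, sum_comm (s := univ) (t := s), sum_div]

lemma bExpect_const_mul (c : ℝ) (g : (Fin n → Bool) → ℝ) :
    bExpect (fun x => c * g x) = c * bExpect g := by
  simp only [bExpect, ← mul_sum, mul_div_assoc]

lemma bExpect_sq_sum_mul_bChi (c : Finset (Fin n) → ℝ) :
    bExpect (fun x => (∑ S, c S * bChi S x) ^ 2) = ∑ S, c S ^ 2 := by
  calc bExpect (fun x => (∑ S, c S * bChi S x) ^ 2)
      = bExpect (fun x => ∑ S, ∑ T, c S * c T * (bChi S x * bChi T x)) := by
        congr 1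
        funext x
        rw [sq, sum_mul_sum]
        exact sum_congr rfl fun S _ => sum_congr rfl fun T _ => by ring
    _ = ∑ S, ∑ T, c S * c T * bExpect (fun x => bChi S x * bChi T x) := by
        simp only [bExpect_sum, bExpect_const_mul]
    _ = ∑ S, c S ^ 2 := by
        simp [bExpect_bChi_mul_bChi, sq]

lemma sum_bFourier_mul_bChi (f : (Fin n → Bool) → ℝ) (x : Fin n → Bool) :
    ∑ S, bFourier f S * bChi S x = f x := by
  calc ∑ S, bFourier f S * bChi S x
      = (∑ y, f y * ∑ S : Finset (Fin n), bChi S y * bChi S x) / 2 ^ n := by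
        simp only [bFourier, bExpect, div_mul_eq_mul_div, ← sum_div, sum_mul, mul_sum,
          mul_assoc]
        rw [sum_comm]
    _ = f x := by
        simp [sum_bChi_mul_bChi_apply]

end Expectation

section Pivotal

variable {n : ℕ}

lemma bChi_sub_bChi_bFlip1 (S : Finset (Fin n)) (k : Fin n) (x : Fin n → Bool) :
    bChi S x - bChi S (bFlip1 k x) = if k ∈ S then 2 * bChi S x else 0 := by
  have hflip : (fun i => bSgn (bFlip1 k x i))
      = Function.update (fun i => bSgn (x i)) k (-bSgn (x k)) := by
    rw [bFlip1, ← bSgn_not]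
    exact Function.comp_update bSgn x k _
  unfold bChi
  rw [hflip]
  split_ifs with hk
  · rw [prod_update_of_mem hk, ← mul_prod_erase S _ hk, sdiff_singleton_eq_erase]
    ring
  · rw [prod_update_of_notMem hk, sub_self]

lemma sum_sub_apply_bFlip1 (f : (Fin n → Bool) → ℝ) (x : Fin n → Bool) :
    ∑ k, (f x - f (bFlip1 k x))
      = 2 * ∑ S : Finset (Fin n), S.card * bFourier f S * bChi S x := by
  calc ∑ k, (f x - f (bFlip1 k x))
      = ∑ k, ∑ S, bFourier f S * (bChi S x - bChi S (bFlip1 k x)) := by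
        simp only [mul_sub, sum_sub_distrib, sum_bFourier_mul_bChi]
    _ = ∑ S : Finset (Fin n), ∑ k ∈ S, bFourier f S * (2 * bChi S x) := by
        rw [sum_comm]
        simp only [bChi_sub_bChi_bFlip1, mul_ite, mul_zero, sum_ite_mem, univ_inter]
    _ = 2 * ∑ S : Finset (Fin n), S.card * bFourier f S * bChi S x := by
        simp only [sum_const, nsmul_eq_mul, mul_sum]
        exact sum_congr rfl fun S _ => by ring

lemma ite_ne_eq_mul_sub_div_two {a b : ℝ} (ha : a = 1 ∨ a = -1) (hb : b = 1 ∨ b = -1) :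
    (if a ≠ b then 1 else 0) = a * (a - b) / 2 := by
  rcases ha with rfl | rfl <;> rcases hb with rfl | rfl <;> norm_num

lemma IsBooleanFn.sq_eq_one {f : (Fin n → Bool) → ℝ} (hf : IsBooleanFn f)
    (x : Fin n → Bool) : f x ^ 2 = 1 := by
  rcases hf x with h | h <;> simp [h]

lemma IsBooleanFn.card_pivotal {f : (Fin n → Bool) → ℝ} (hf : IsBooleanFn f)
    (x : Fin n → Bool) :
    (#{k | f x ≠ f (bFlip1 k x)} : ℝ)
      = f x * ∑ S : Finset (Fin n), S.card * bFourier f S * bChi S x := by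
  rw [card_filter, Nat.cast_sum]
  push_cast
  simp only [ite_ne_eq_mul_sub_div_two (hf x) (hf _), ← sum_div, ← mul_sum,
    sum_sub_apply_bFlip1]
  ring

end Pivotal

theorem pivotal_second_moment (n : ℕ) (f : (Fin n → Bool) → ℝ)
    (hf : IsBooleanFn f) :
    bExpect (fun x =>
        ((univ.filter (fun k : Fin n => f x ≠ f (bFlip1 k x))).card : ℝ) ^ 2)
      = ∑ S : Finset (Fin n), (S.card : ℝ) ^ 2 * bFourier f S ^ 2 := by
  have hsq : ∀ x, ((univ.filter (fun k : Fin n => f x ≠ f (bFlip1 k x))).card : ℝ) ^ 2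
      = (∑ S : Finset (Fin n), S.card * bFourier f S * bChi S x) ^ 2 := fun x => by
    rw [hf.card_pivotal, mul_pow, hf.sq_eq_one, one_mul]
  simp only [hsq, bExpect_sq_sum_mul_bChi, mul_pow]
end

section
/- There exist constants c₁, c₂ > 0 such that for every Boolean function f : {-1,1}^n → {-1,1}, the spectrum entropy satisfies Ent(f) ≤ c₁·I(f) + c₂·∑_{k∈[n]} −I_k(f)·log I_k(f) (terms with I_k(f) = 0 contribute 0). -/
open Finset

/-!
The squared Fourier coefficients `w S = f̂(S)²` of a Boolean function form, by Parseval, a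
probability distribution on subsets, and the probability `P(k ∈ S)` under it is the influence
`I_k`. Gibbs' inequality against the product distribution with the same one-point marginals gives
subadditivity of entropy, `Ent(w) ≤ ∑ₖ H(I_k)` (in nats), and `H(p) ≤ p - p log p` because
`-(1 - p) log (1 - p) ≤ p`. Summing over `k` and dividing by `log 2` gives the bound with
`c₁ = c₂ = 1 / log 2`.
-/

open Real

theorem negMulLog_le_neg_mul_log_add_sub {p q : ℝ} (hp : 0 ≤ p) (hq : 0 ≤ q)
    (hpq : q = 0 → p = 0) : negMulLog p ≤ -(p * log q) + (q - p) := by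
  rcases hp.eq_or_lt with rfl | hp
  · simpa using hq
  have hq : 0 < q := hq.lt_of_ne fun h => hp.ne' (hpq h.symm)
  have hlog : log q - log p ≤ q / p - 1 := by
    rw [← log_div hq.ne' hp.ne']
    exact log_le_sub_one_of_pos (div_pos hq hp)
  calc negMulLog p = -(p * log q) + p * (log q - log p) := by rw [negMulLog_eq_neg]; ring
    _ ≤ -(p * log q) + p * (q / p - 1) := by gcongr
    _ = -(p * log q) + (q - p) := by field_simp

theorem sum_negMulLog_le_sum_neg_mul_log {ι : Type*} (s : Finset ι) {p q : ι → ℝ}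
    (hp : ∀ i ∈ s, 0 ≤ p i) (hq : ∀ i ∈ s, 0 ≤ q i) (hpq : ∀ i ∈ s, q i = 0 → p i = 0)
    (hsum : ∑ i ∈ s, q i ≤ ∑ i ∈ s, p i) :
    ∑ i ∈ s, negMulLog (p i) ≤ ∑ i ∈ s, -(p i * log (q i)) := by
  have := Finset.sum_le_sum fun i hi =>
    negMulLog_le_neg_mul_log_add_sub (hp i hi) (hq i hi) (hpq i hi)
  rw [Finset.sum_add_distrib, Finset.sum_sub_distrib] at this
  linarith

theorem binEntropy_le_self_add_negMulLog {p : ℝ} (hp : p ≤ 1) :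
    binEntropy p ≤ p + negMulLog p := by
  have := negMulLog_le_one_sub_self (sub_nonneg.2 hp)
  rw [binEntropy_eq_negMulLog_add_negMulLog_one_sub]
  linarith

section RandomSubset

variable {ι : Type*} [Fintype ι] [DecidableEq ι]

def bernoulliProd (p : ι → ℝ) (S : Finset ι) : ℝ :=
  ∏ k, if k ∈ S then p k else 1 - p k

theorem sum_bernoulliProd (p : ι → ℝ) : ∑ S, bernoulliProd p S = 1 := by
  have h := Fintype.prod_add p (fun k => 1 - p k)
  simp only [add_sub_cancel, Finset.prod_const_one] at h
  rw [h]
  refine Finset.sum_congr rfl fun S _ => ?_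
  rw [bernoulliProd, Finset.prod_ite, Finset.filter_mem_eq_inter, Finset.univ_inter,
    Finset.filter_not, Finset.filter_mem_eq_inter, Finset.univ_inter, Finset.compl_eq_univ_sdiff]

def inclusionProb (w : Finset ι → ℝ) (k : ι) : ℝ :=
  ∑ S with k ∈ S, w S

variable {w : Finset ι → ℝ}

theorem sum_card_mul_eq_sum_inclusionProb (w : Finset ι → ℝ) :
    ∑ S, (S.card : ℝ) * w S = ∑ k, inclusionProb w k := by
  simp only [inclusionProb, Finset.sum_filter]
  rw [Finset.sum_comm]
  refine Finset.sum_congr rfl fun S _ => ?_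
  rw [← Finset.sum_filter, Finset.filter_mem_eq_inter, Finset.univ_inter, Finset.sum_const,
    nsmul_eq_mul]

theorem sum_filter_notMem_eq_one_sub_inclusionProb (hw1 : ∑ S, w S = 1) (k : ι) :
    ∑ S with k ∉ S, w S = 1 - inclusionProb w k := by
  rw [← hw1, ← Finset.sum_filter_add_sum_filter_not Finset.univ (k ∈ ·), inclusionProb,
    add_sub_cancel_left]

theorem le_inclusionProb (hw : ∀ S, 0 ≤ w S) {k : ι} {S : Finset ι} (hk : k ∈ S) :
    w S ≤ inclusionProb w k :=
  Finset.single_le_sum (fun S _ => hw S) (Finset.mem_filter.2 ⟨Finset.mem_univ S, hk⟩)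

theorem le_one_sub_inclusionProb (hw : ∀ S, 0 ≤ w S) (hw1 : ∑ S, w S = 1) {k : ι}
    {S : Finset ι} (hk : k ∉ S) : w S ≤ 1 - inclusionProb w k := by
  rw [← sum_filter_notMem_eq_one_sub_inclusionProb hw1]
  exact Finset.single_le_sum (fun S _ => hw S) (Finset.mem_filter.2 ⟨Finset.mem_univ S, hk⟩)

theorem bernoulliProd_inclusionProb_nonneg (hw : ∀ S, 0 ≤ w S) (hw1 : ∑ S, w S = 1)
    (S : Finset ι) : 0 ≤ bernoulliProd (inclusionProb w) S := by
  refine Finset.prod_nonneg fun k _ => ?_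
  split_ifs with hk
  · exact (hw S).trans (le_inclusionProb hw hk)
  · exact (hw S).trans (le_one_sub_inclusionProb hw hw1 hk)

theorem eq_zero_of_bernoulliProd_inclusionProb_eq_zero (hw : ∀ S, 0 ≤ w S)
    (hw1 : ∑ S, w S = 1) {S : Finset ι} (hS : bernoulliProd (inclusionProb w) S = 0) :
    w S = 0 := by
  obtain ⟨k, -, hk⟩ := Finset.prod_eq_zero_iff.1 hS
  refine le_antisymm ?_ (hw S)
  split_ifs at hk with hkS
  · exact hk ▸ le_inclusionProb hw hkS
  · exact hk ▸ le_one_sub_inclusionProb hw hw1 hkS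

theorem log_bernoulliProd {p : ι → ℝ} {S : Finset ι} (hS : bernoulliProd p S ≠ 0) :
    log (bernoulliProd p S) = ∑ k, if k ∈ S then log (p k) else log (1 - p k) := by
  rw [bernoulliProd, log_prod fun k _ => Finset.prod_ne_zero_iff.1 hS k (Finset.mem_univ k)]
  exact Finset.sum_congr rfl fun k _ => apply_ite log _ _ _

theorem sum_neg_mul_log_bernoulliProd_inclusionProb (hw : ∀ S, 0 ≤ w S)
    (hw1 : ∑ S, w S = 1) :
    ∑ S, -(w S * log (bernoulliProd (inclusionProb w) S))
      = ∑ k, binEntropy (inclusionProb w k) := by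
  set p := inclusionProb w
  have hsplit : ∀ S, -(w S * log (bernoulliProd p S))
      = ∑ k, if k ∈ S then -(w S * log (p k)) else -(w S * log (1 - p k)) := by
    intro S
    by_cases hS : w S = 0
    · simp [hS]
    rw [log_bernoulliProd fun h => hS (eq_zero_of_bernoulliProd_inclusionProb_eq_zero hw hw1 h),
      Finset.mul_sum, ← Finset.sum_neg_distrib]
    exact Finset.sum_congr rfl fun k _ => by split_ifs <;> rfl
  simp only [hsplit]
  rw [Finset.sum_comm]
  refine Finset.sum_congr rfl fun k _ => ?_
  rw [Finset.sum_ite, Finset.sum_neg_distrib, Finset.sum_neg_distrib, ← Finset.sum_mul,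
    ← Finset.sum_mul, sum_filter_notMem_eq_one_sub_inclusionProb hw1,
    binEntropy_eq_negMulLog_add_negMulLog_one_sub, negMulLog_eq_neg]
  rfl

theorem sum_negMulLog_le_sum_binEntropy_inclusionProb (hw : ∀ S, 0 ≤ w S)
    (hw1 : ∑ S, w S = 1) :
    ∑ S, negMulLog (w S) ≤ ∑ k, binEntropy (inclusionProb w k) := by
  rw [← sum_neg_mul_log_bernoulliProd_inclusionProb hw hw1]
  exact sum_negMulLog_le_sum_neg_mul_log _ (fun S _ => hw S)
    (fun S _ => bernoulliProd_inclusionProb_nonneg hw hw1 S)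
    (fun S _ => eq_zero_of_bernoulliProd_inclusionProb_eq_zero hw hw1)
    (by rw [sum_bernoulliProd, hw1])

theorem sum_negMulLog_le_sum_card_mul_add_sum_negMulLog_inclusionProb (hw : ∀ S, 0 ≤ w S)
    (hw1 : ∑ S, w S = 1) :
    ∑ S, negMulLog (w S) ≤ ∑ S, (S.card : ℝ) * w S + ∑ k, negMulLog (inclusionProb w k) := by
  rw [sum_card_mul_eq_sum_inclusionProb, ← Finset.sum_add_distrib]
  refine (sum_negMulLog_le_sum_binEntropy_inclusionProb hw hw1).trans
    (Finset.sum_le_sum fun k _ => binEntropy_le_self_add_negMulLog ?_)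
  have := sum_filter_notMem_eq_one_sub_inclusionProb hw1 k
  have := Finset.sum_nonneg fun S (_ : S ∈ Finset.univ.filter (k ∉ ·)) => hw S
  linarith

end RandomSubset

theorem one_add_bSgn_mul_bSgn (a b : Bool) : 1 + bSgn a * bSgn b = if a = b then 2 else 0 := by
  cases a <;> cases b <;> norm_num [bSgn]

theorem sum_bChi_mul_bChi {n : ℕ} (x y : Fin n → Bool) :
    ∑ S, bChi S x * bChi S y = if x = y then (2 : ℝ) ^ n else 0 := by
  calc ∑ S, bChi S x * bChi S y = ∏ i, (1 + bSgn (x i) * bSgn (y i)) := by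
        simp only [bChi, ← Finset.prod_mul_distrib, Finset.prod_one_add, Finset.powerset_univ]
    _ = if x = y then (2 : ℝ) ^ n else 0 := by
        simp only [one_add_bSgn_mul_bSgn, Fintype.prod_ite_zero, Finset.prod_const,
          Finset.card_univ, Fintype.card_fin, funext_iff]

theorem sum_bFourier_sq {n : ℕ} (f : (Fin n → Bool) → ℝ) :
    ∑ S, bFourier f S ^ 2 = bExpect fun x => f x ^ 2 := by
  have hsum : ∑ S, (∑ x, f x * bChi S x) ^ 2 = 2 ^ n * ∑ x, f x ^ 2 :=
    calc ∑ S, (∑ x, f x * bChi S x) ^ 2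
        = ∑ S, ∑ x, ∑ y, f x * f y * (bChi S x * bChi S y) := by
          simp only [sq, Finset.sum_mul_sum]
          exact Finset.sum_congr rfl fun S _ => Finset.sum_congr rfl fun x _ =>
            Finset.sum_congr rfl fun y _ => by ring
      _ = ∑ x, ∑ y, f x * f y * ∑ S, bChi S x * bChi S y := by
          rw [Finset.sum_comm]
          simp only [Finset.mul_sum]
          exact Finset.sum_congr rfl fun x _ => Finset.sum_comm
      _ = 2 ^ n * ∑ x, f x ^ 2 := by
          simp [sum_bChi_mul_bChi, Finset.mul_sum, sq, mul_comm]
  simp only [bFourier, bExpect, div_pow, ← Finset.sum_div, hsum]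
  field_simp

theorem sum_bFourier_sq_of_isBooleanFn {n : ℕ} {f : (Fin n → Bool) → ℝ} (hf : IsBooleanFn f) :
    ∑ S, bFourier f S ^ 2 = 1 := by
  have hsq : ∀ x, f x ^ 2 = 1 := fun x => by rcases hf x with h | h <;> simp [h]
  simp [sum_bFourier_sq, hsq, bExpect]

theorem specEnt_eq_sum_negMulLog {n : ℕ} (f : (Fin n → Bool) → ℝ) :
    specEnt f = (log 2)⁻¹ * ∑ S, negMulLog (bFourier f S ^ 2) := by
  rw [specEnt, Finset.mul_sum]
  refine Finset.sum_congr rfl fun S _ => ?_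
  rw [logb, one_div, log_inv, negMulLog]
  ring

theorem entropy_influence_bound :
    ∃ c₁ c₂ : ℝ, 0 < c₁ ∧ 0 < c₂ ∧
      ∀ (n : ℕ) (f : (Fin n → Bool) → ℝ), IsBooleanFn f →
        specEnt f ≤ c₁ * totInfl f
          + c₂ * ∑ k : Fin n, -(inflS f k * Real.log (inflS f k)) := by
  have hlog2 : 0 < (log 2)⁻¹ := inv_pos.2 (log_pos one_lt_two)
  refine ⟨(log 2)⁻¹, (log 2)⁻¹, hlog2, hlog2, fun n f hf => ?_⟩
  -- for `w S = f̂(S)²`, `totInfl f` and `inflS f k` unfold to `∑ |S| w S` and `inclusionProb w k`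
  have hent : ∑ S, negMulLog (bFourier f S ^ 2)
      ≤ totInfl f + ∑ k, negMulLog (inflS f k) :=
    sum_negMulLog_le_sum_card_mul_add_sum_negMulLog_inclusionProb (fun S => sq_nonneg _)
      (sum_bFourier_sq_of_isBooleanFn hf)
  rw [specEnt_eq_sum_negMulLog, ← mul_add]
  simpa only [negMulLog_eq_neg] using mul_le_mul_of_nonneg_left hent hlog2.le
end
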